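/- arXiv:0708.2574 — 6 statements merged into one kernel-verified Lean document; each statement's English description precedes it below -/
import Mathlib

section
/- The q-Catalan number C_n(q) = (1/[n+1]) * [2n choose n]_q is a polynomial in q of degree n(n-1) with nonnegative integer coefficients. -/
open Polynomial Finset

noncomputable def qInt (m : ℕ) : Polynomial ℝ :=
  ∑ i ∈ Finset.range m, Polynomial.X ^ i

noncomputable def qFact (m : ℕ) : Polynomial ℝ :=
  ∏ i ∈ Finset.range m, qInt (i + 1)

/-! The polynomial is the major-index generating function of Dyck paths of semilength `n`.
Ballot paths with `n` up and `k ≤ n` down steps, split according to their last step, satisfy a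
Pascal-type recursion with coefficients in `ℕ[X]`. Both halves have closed forms in q-integers,
proved by induction on `(k, n - k)` from two identities between q-integers, and at `k = n` their
sum is `[2n]! / ([n]! [n + 1]!)`. -/

lemma X_sub_one_ne_zero : (X - 1 : ℝ[X]) ≠ 0 := X_sub_C_ne_zero 1

lemma qInt_mul_X_sub_one (m : ℕ) : qInt m * (X - 1) = X ^ m - 1 := geom_sum_mul X m

lemma qInt_mul_qInt_mul_X_sub_one_sq (a b : ℕ) :
    qInt a * qInt b * (X - 1) ^ 2 = (X ^ a - 1) * (X ^ b - 1) := by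
  rw [← qInt_mul_X_sub_one, ← qInt_mul_X_sub_one]; ring

lemma qInt_zero : qInt 0 = 0 := by simp [qInt]

lemma qInt_one : qInt 1 = 1 := by simp [qInt]

lemma qInt_add (a b : ℕ) : qInt (a + b) = qInt a + X ^ a * qInt b := by
  simp only [qInt, sum_range_add, mul_sum, pow_add]

lemma qInt_ne_zero {m : ℕ} (hm : m ≠ 0) : qInt m ≠ 0 := by
  intro h
  have h1 : (qInt m).eval 1 = m := by simp [qInt]
  rw [h, eval_zero] at h1
  exact hm (by exact_mod_cast h1.symm)

lemma natDegree_qInt (m : ℕ) : (qInt m).natDegree = m - 1 := by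
  rcases Nat.eq_zero_or_pos m with rfl | hm
  · simp [qInt_zero]
  · have h := congrArg natDegree (qInt_mul_X_sub_one m)
    have hX : (X - 1 : ℝ[X]).natDegree = 1 := natDegree_X_sub_C 1
    have hXm : (X ^ m - 1 : ℝ[X]).natDegree = m := natDegree_X_pow_sub_C
    rw [natDegree_mul (qInt_ne_zero hm.ne') X_sub_one_ne_zero, hX, hXm] at h
    omega

lemma qFact_succ (m : ℕ) : qFact (m + 1) = qFact m * qInt (m + 1) := prod_range_succ _ m

lemma qFact_ne_zero (m : ℕ) : qFact m ≠ 0 :=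
  prod_ne_zero_iff.2 fun i _ => qInt_ne_zero i.succ_ne_zero

lemma natDegree_qFact (m : ℕ) : (qFact m).natDegree = ∑ i ∈ range m, i := by
  rw [qFact, natDegree_prod _ _ fun i _ => qInt_ne_zero i.succ_ne_zero]
  simp [natDegree_qInt]

lemma natDegree_eq_of_qFact_sq_mul_qInt_mul_eq {n : ℕ} {P : ℝ[X]}
    (h : qFact n ^ 2 * qInt (n + 1) * P = qFact (2 * n)) : P.natDegree = n * (n - 1) := by
  have hP : P ≠ 0 := by rintro rfl; exact qFact_ne_zero _ (by simpa using h.symm)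
  have hdeg := congrArg natDegree h
  rw [natDegree_mul (by simp [qFact_ne_zero, qInt_ne_zero]) hP,
    natDegree_mul (pow_ne_zero 2 (qFact_ne_zero n)) (qInt_ne_zero n.succ_ne_zero),
    natDegree_pow, natDegree_qFact, natDegree_qFact, natDegree_qInt] at hdeg
  have hn := sum_range_id_mul_two n
  have h2n := sum_range_id_mul_two (2 * n)
  rcases n with _ | t
  · simpa using hdeg
  · simp only [Nat.succ_eq_add_one, Nat.add_sub_cancel] at hn hdeg ⊢
    rw [show 2 * (t + 1) - 1 = 2 * t + 1 by omega] at h2n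
    nlinarith

lemma qInt_ballotUp_step_identity (k j : ℕ) :
    qInt j * qInt (k + j + 2) + X ^ j * qInt (k + 1)
        + X ^ (k + j + 1) * (qInt (k + 1) * qInt (j + 1)) =
      qInt (j + 1) * qInt (2 * k + j + 2) := by
  apply mul_right_cancel₀ (pow_ne_zero 2 X_sub_one_ne_zero)
  linear_combination qInt_mul_qInt_mul_X_sub_one_sq j (k + j + 2)
    + X ^ j * (X - 1) * qInt_mul_X_sub_one (k + 1)
    + X ^ (k + j + 1) * qInt_mul_qInt_mul_X_sub_one_sq (k + 1) (j + 1)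
    - qInt_mul_qInt_mul_X_sub_one_sq (j + 1) (2 * k + j + 2)

lemma qInt_ballotDown_step_identity (k j : ℕ) :
    X ^ (2 * k) * (qInt (k + j + 2) * qInt (j + 1)) + qInt k + X ^ k * (qInt k * qInt (j + 2)) =
      (1 + X ^ (k + 1) * qInt (j + 1)) * qInt (2 * k + j + 1) := by
  apply mul_right_cancel₀ (pow_ne_zero 2 X_sub_one_ne_zero)
  linear_combination X ^ (2 * k) * qInt_mul_qInt_mul_X_sub_one_sq (k + j + 2) (j + 1)
    + (X - 1) * qInt_mul_X_sub_one k
    + X ^ k * qInt_mul_qInt_mul_X_sub_one_sq k (j + 2)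
    - (X - 1) * qInt_mul_X_sub_one (2 * k + j + 1)
    - X ^ (k + 1) * qInt_mul_qInt_mul_X_sub_one_sq (j + 1) (2 * k + j + 1)

/-- `ballotMaj n k` enumerates, by major index, the lattice paths with `n` up and `k` down steps
none of whose prefixes has more down than up steps; the first component counts the paths that
end with an up step or are empty, the second those that end with a down step. A descent is a
down step followed by an up step, counted at the position of the down step, so appending an up
step to a path of length `n + k + 1` ending with a down step multiplies by `X ^ (n + k + 1)`. -/
noncomputable def ballotMaj : ℕ → ℕ → ℕ[X] × ℕ[X]
  | _, 0 => (1, 0)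
  | 0, _ + 1 => (0, 0)
  | n + 1, k + 1 =>
    if k ≤ n then
      ((ballotMaj n (k + 1)).1 + X ^ (n + k + 1) * (ballotMaj n (k + 1)).2,
        (ballotMaj (n + 1) k).1 + (ballotMaj (n + 1) k).2)
    else (0, 0)

noncomputable def ballotUp (n k : ℕ) : ℝ[X] := (ballotMaj n k).1.map (Nat.castRingHom ℝ)

noncomputable def ballotDown (n k : ℕ) : ℝ[X] := (ballotMaj n k).2.map (Nat.castRingHom ℝ)

lemma ballotMaj_zero_right (n : ℕ) : ballotMaj n 0 = (1, 0) := by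
  cases n <;> rw [ballotMaj]

lemma ballotMaj_of_lt {n k : ℕ} (h : n < k) : ballotMaj n k = (0, 0) := by
  obtain ⟨k, rfl⟩ : ∃ k', k = k' + 1 := ⟨k - 1, by omega⟩
  cases n with
  | zero => rw [ballotMaj]
  | succ n => rw [ballotMaj, if_neg (by omega)]

lemma ballotUp_zero_right (n : ℕ) : ballotUp n 0 = 1 := by
  simp [ballotUp, ballotMaj_zero_right]

lemma ballotDown_zero_right (n : ℕ) : ballotDown n 0 = 0 := by
  simp [ballotDown, ballotMaj_zero_right]

lemma ballotUp_of_lt {n k : ℕ} (h : n < k) : ballotUp n k = 0 := by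
  simp [ballotUp, ballotMaj_of_lt h]

lemma ballotDown_of_lt {n k : ℕ} (h : n < k) : ballotDown n k = 0 := by
  simp [ballotDown, ballotMaj_of_lt h]

lemma ballotUp_succ_succ {n k : ℕ} (h : k ≤ n) :
    ballotUp (n + 1) (k + 1) = ballotUp n (k + 1) + X ^ (n + k + 1) * ballotDown n (k + 1) := by
  simp [ballotUp, ballotDown, ballotMaj, if_pos h]

lemma ballotDown_succ_succ {n k : ℕ} (h : k ≤ n) :
    ballotDown (n + 1) (k + 1) = ballotUp (n + 1) k + ballotDown (n + 1) k := by
  simp [ballotUp, ballotDown, ballotMaj, if_pos h]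

/- With `n = k + j`: `ballotUp n k = X ^ (2k) [j] [n + k - 1]! / ([k]! [n]!)` and
`ballotDown n k = (1 + X ^ k [j + 1]) [n + k - 1]! / ([k - 1]! [n + 1]!)`, cleared of
denominators so that they also make sense at `k = n = 0`. -/
def BallotUpClosedForm (k j : ℕ) : Prop :=
  qInt (2 * k + j) * qFact k * qFact (k + j + 1) * ballotUp (k + j) k =
    X ^ (2 * k) * qInt (k + j + 1) * qInt j * qFact (2 * k + j)

def BallotDownClosedForm (k j : ℕ) : Prop :=
  qInt (2 * k + j) * qFact k * qFact (k + j + 1) * ballotDown (k + j) k =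
    qInt k * (1 + X ^ k * qInt (j + 1)) * qFact (2 * k + j)

lemma ballotUpClosedForm_zero (j : ℕ) : BallotUpClosedForm 0 j := by
  simp only [BallotUpClosedForm, ballotUp_zero_right, qFact_succ]
  simp [qFact]
  ring

lemma ballotDownClosedForm_zero (j : ℕ) : BallotDownClosedForm 0 j := by
  simp [BallotDownClosedForm, ballotDown_zero_right, qInt_zero]

lemma ballotUpClosedForm_succ_zero (k : ℕ) : BallotUpClosedForm (k + 1) 0 := by
  rw [BallotUpClosedForm, add_zero, ballotUp_succ_succ le_rfl, ballotUp_of_lt k.lt_succ_self,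
    ballotDown_of_lt k.lt_succ_self]
  simp [qInt_zero]

lemma ballotDownClosedForm_succ {k j : ℕ} (hUp : BallotUpClosedForm k (j + 1))
    (hDown : BallotDownClosedForm k (j + 1)) : BallotDownClosedForm (k + 1) j := by
  unfold BallotUpClosedForm at hUp
  unfold BallotDownClosedForm at hDown ⊢
  apply mul_left_cancel₀ (qInt_ne_zero (show 2 * k + j + 1 ≠ 0 by omega))
  linear_combination (norm := ring_nf) (qInt (2 * k + j + 2) * qInt (k + 1)) * (hUp + hDown)
    + qInt (2 * k + j + 2) * qInt (k + 1) * qFact (2 * k + j + 1)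
      * qInt_ballotDown_step_identity k j
    + qInt (2 * k + j + 1) * qInt (2 * k + j + 2) * qFact (k + j + 2)
      * (ballotUp (k + j + 1) k + ballotDown (k + j + 1) k) * qFact_succ k
    - qInt (2 * k + j + 1) * qInt (k + 1) * (1 + X ^ (k + 1) * qInt (j + 1))
      * qFact_succ (2 * k + j + 1)
    + qInt (2 * k + j + 1) * qInt (2 * k + j + 2) * qFact (k + 1) * qFact (k + j + 2)
      * ballotDown_succ_succ (Nat.le_add_right k j)

lemma ballotUpClosedForm_succ_succ {k j : ℕ} (hUp : BallotUpClosedForm (k + 1) j)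
    (hDown : BallotDownClosedForm (k + 1) j) : BallotUpClosedForm (k + 1) (j + 1) := by
  unfold BallotUpClosedForm at hUp ⊢
  unfold BallotDownClosedForm at hDown
  apply mul_left_cancel₀ (qInt_ne_zero (show 2 * k + j + 2 ≠ 0 by omega))
  linear_combination (norm := ring_nf) qInt (2 * k + j + 3) * qInt (k + j + 3) * hUp
    + qInt (2 * k + j + 3) * qInt (k + j + 3) * X ^ (2 * k + j + 2) * hDown
    + qInt (2 * k + j + 3) * qInt (k + j + 3) * qFact (2 * k + j + 2) * X ^ (2 * k + 2)
      * qInt_ballotUp_step_identity k j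
    + qInt (2 * k + j + 2) * qInt (2 * k + j + 3) * qFact (k + 1)
      * (ballotUp (k + j + 1) (k + 1) + X ^ (2 * k + j + 2) * ballotDown (k + j + 1) (k + 1))
      * qFact_succ (k + j + 2)
    - qInt (2 * k + j + 2) * X ^ (2 * k + 2) * qInt (k + j + 3) * qInt (j + 1)
      * qFact_succ (2 * k + j + 2)
    + qInt (2 * k + j + 2) * qInt (2 * k + j + 3) * qFact (k + 1) * qFact (k + j + 3)
      * ballotUp_succ_succ (show k ≤ k + j + 1 by omega)

lemma ballotUpClosedForm_and_ballotDownClosedForm (k j : ℕ) :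
    BallotUpClosedForm k j ∧ BallotDownClosedForm k j := by
  induction k generalizing j with
  | zero => exact ⟨ballotUpClosedForm_zero j, ballotDownClosedForm_zero j⟩
  | succ k ih =>
    have hDown (j : ℕ) : BallotDownClosedForm (k + 1) j :=
      ballotDownClosedForm_succ (ih (j + 1)).1 (ih (j + 1)).2
    refine ⟨?_, hDown j⟩
    induction j with
    | zero => exact ballotUpClosedForm_succ_zero k
    | succ j ihj => exact ballotUpClosedForm_succ_succ ihj (hDown j)

lemma qFact_sq_mul_qInt_mul_ballot_diag {n : ℕ} (hn : 1 ≤ n) :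
    qFact n ^ 2 * qInt (n + 1) * (ballotUp n n + ballotDown n n) = qFact (2 * n) := by
  obtain ⟨hUp, hDown⟩ := ballotUpClosedForm_and_ballotDownClosedForm n 0
  simp only [BallotUpClosedForm, BallotDownClosedForm, qInt_zero, zero_add, qInt_one]
    at hUp hDown
  have hsplit : qInt n * (1 + X ^ n) = qInt (2 * n) := by rw [two_mul, qInt_add]; ring
  apply mul_left_cancel₀ (qInt_ne_zero (show 2 * n ≠ 0 by omega))
  linear_combination (norm := ring_nf) hUp + hDown + qFact (2 * n) * hsplit
    - (qInt (2 * n) * qFact n * (ballotUp n n + ballotDown n n)) * qFact_succ n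

/-- The q-Catalan number $C_n(q) = [2n choose n]_q / [n+1]_q$ is a polynomial in $q$
of degree $n(n-1)$ with nonnegative integer coefficients. -/
theorem qCatalan_polynomial_nonneg_int_coeffs (n : ℕ) (hn : 1 ≤ n) :
    ∃ P : Polynomial ℝ,
      qFact n ^ 2 * qInt (n + 1) * P = qFact (2 * n) ∧
      P.natDegree = n * (n - 1) ∧
      ∀ k : ℕ, ∃ c : ℕ, P.coeff k = (c : ℝ) := by
  have h := qFact_sq_mul_qInt_mul_ballot_diag hn
  refine ⟨_, h, natDegree_eq_of_qFact_sq_mul_qInt_mul_eq h, fun i => ?_⟩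
  exact ⟨((ballotMaj n n).1 + (ballotMaj n n).2).coeff i, by simp [ballotUp, ballotDown]⟩
end

section
/- For all sufficiently large n and all k ≥ 2, with σ² = (n³ - n)/6, one has σ^{-2k} · Σ_{i=2}^{n} ((n+i)^{2k} - i^{2k}) < 64^{2k} · n^{1-k}. -/
open Finset

/-!
Since $n^3 - n ≥ \tfrac34 n^3$ for $n ≥ 2$, we have $σ^{-2} ≤ 8 n^{-3}$, and each of the at most $n$
summands is at most $(2n)^{2k}$. Together this bounds the left-hand side by
$8^k n^{-3k} \cdot n (2n)^{2k} = 32^k n^{1-k}$, far below $64^{2k} n^{1-k}$.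
-/

lemma cube_div_eight_le_cube_sub_div_six {x : ℝ} (hx : 2 ≤ x) : x ^ 3 / 8 ≤ (x ^ 3 - x) / 6 := by
  nlinarith [mul_le_mul_of_nonneg_left (mul_self_le_mul_self (by norm_num) hx) (by linarith : 0 ≤ x)]

lemma inv_cube_sub_div_six_le {x : ℝ} (hx : 2 ≤ x) : ((x ^ 3 - x) / 6)⁻¹ ≤ 8 / x ^ 3 := by
  simpa only [inv_div] using inv_anti₀ (by positivity) (cube_div_eight_le_cube_sub_div_six hx)

lemma sum_Icc_add_pow_sub_pow_nonneg (n m : ℕ) :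
    0 ≤ ∑ i ∈ Icc 2 n, (((n : ℝ) + i) ^ m - (i : ℝ) ^ m) :=
  sum_nonneg fun i _ => sub_nonneg.2 <| pow_le_pow_left₀ i.cast_nonneg (by simp) m

lemma sum_Icc_add_pow_sub_pow_le (n m : ℕ) :
    ∑ i ∈ Icc 2 n, (((n : ℝ) + i) ^ m - (i : ℝ) ^ m) ≤ n * (2 * n) ^ m := by
  have hterm : ∀ i ∈ Icc 2 n, ((n : ℝ) + i) ^ m - (i : ℝ) ^ m ≤ (2 * n) ^ m := by
    intro i hi
    have hin : (i : ℝ) ≤ n := by exact_mod_cast (mem_Icc.1 hi).2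
    have : ((n : ℝ) + i) ^ m ≤ (2 * n) ^ m := pow_le_pow_left₀ (by positivity) (by linarith) m
    linarith [pow_nonneg (Nat.cast_nonneg i : (0 : ℝ) ≤ i) m]
  have hcard : ((#(Icc 2 n) : ℕ) : ℝ) ≤ n := by
    rw [Nat.card_Icc]
    exact_mod_cast Nat.sub_le_of_le_add (by omega)
  calc ∑ i ∈ Icc 2 n, (((n : ℝ) + i) ^ m - (i : ℝ) ^ m)
      ≤ #(Icc 2 n) • (2 * (n : ℝ)) ^ m := sum_le_card_nsmul _ _ _ hterm
    _ ≤ n * (2 * n) ^ m := by rw [nsmul_eq_mul]; gcongr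

lemma eight_div_cube_pow_mul {x : ℝ} (hx : x ≠ 0) (k : ℕ) :
    (8 / x ^ 3) ^ k * (x * (2 * x) ^ (2 * k)) = 32 ^ k * x ^ ((1 : ℤ) - k) := by
  rw [zpow_sub₀ hx, zpow_one, zpow_natCast, mul_pow, pow_mul, pow_mul, div_pow,
    show (32 : ℝ) = 8 * 2 ^ 2 by norm_num, mul_pow]
  field_simp
  ring

/-- For all sufficiently large $n$ and all $k ≥ 2$, with $σ^2 = (n^3-n)/6$,
$σ^{-2k} Σ_{i=2}^{n} ((n+i)^{2k} - i^{2k}) < 64^{2k} n^{1-k}$. -/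
theorem sigma_normalized_sum_bound :
    ∃ N : ℕ, ∀ n : ℕ, N ≤ n → ∀ k : ℕ, 2 ≤ k →
      ((((n : ℝ) ^ 3 - (n : ℝ)) / 6)⁻¹) ^ k *
          ∑ i ∈ Finset.Icc 2 n, (((n : ℝ) + (i : ℝ)) ^ (2 * k) - (i : ℝ) ^ (2 * k))
        < 64 ^ (2 * k) * (n : ℝ) ^ ((1 : ℤ) - (k : ℤ)) := by
  refine ⟨2, fun n hn k hk => ?_⟩
  have hn2 : (2 : ℝ) ≤ n := by exact_mod_cast hn
  have hσ : 0 ≤ (((n : ℝ) ^ 3 - n) / 6)⁻¹ :=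
    inv_nonneg.2 <| (by positivity : (0 : ℝ) ≤ (n : ℝ) ^ 3 / 8).trans
      (cube_div_eight_le_cube_sub_div_six hn2)
  have h32 : (32 : ℝ) ^ k < 64 ^ (2 * k) := by
    rw [pow_mul]
    exact pow_lt_pow_left₀ (by norm_num) (by norm_num) (by omega)
  calc ((((n : ℝ) ^ 3 - n) / 6)⁻¹) ^ k *
        ∑ i ∈ Icc 2 n, (((n : ℝ) + i) ^ (2 * k) - (i : ℝ) ^ (2 * k))
      ≤ (8 / (n : ℝ) ^ 3) ^ k * (n * (2 * n) ^ (2 * k)) :=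
        mul_le_mul (pow_le_pow_left₀ hσ (inv_cube_sub_div_six_le hn2) k)
          (sum_Icc_add_pow_sub_pow_le n _) (sum_Icc_add_pow_sub_pow_nonneg n _) (by positivity)
    _ = 32 ^ k * (n : ℝ) ^ ((1 : ℤ) - k) := eight_div_cube_pow_mul (by positivity) k
    _ < 64 ^ (2 * k) * (n : ℝ) ^ ((1 : ℤ) - k) := by gcongr
end

section
/- As n → ∞, the sum Σ_{k≥2} B_{2k} · t^{2k}/(2k·(2k)!·σ^{2k}) · Σ_{i=2}^{n} ((n+i)^{2k} - i^{2k}) converges to 0 uniformly for t in any bounded set, where B_{2k} are the Bernoulli numbers and σ² = n(n-1)(n+1)/6. -/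
/-!
Euler's formula `ζ(2m) = (-1)^(m+1) (2π)^(2m) B_{2m} / (2 (2m)!)` together with
`0 ≤ ζ(2m) ≤ ζ(2) < 2` gives `|B_{2m}| ≤ 4 (2m)! / (2π)^(2m) ≤ 4 (2m)! / 36^m`. As `σ² ≥ n³/12`
and the inner sum is at most `n (2n)^(2m)`, the `m`-th term is at most `4n (4C²/(3n))^m` when
`|t| ≤ C`. For `n ≥ 8C²/3` the ratio is at most `1/2`, so the series from `m = 2` on is bounded
by `128 C⁴ / (9n)`.
-/

open Finset Real Nat

lemma abs_bernoulli_two_mul_le {m : ℕ} (hm : m ≠ 0) :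
    |(bernoulli (2 * m) : ℝ)| ≤ 4 * (2 * m)! / (2 * π) ^ (2 * m) := by
  have hs := hasSum_zeta_nat hm
  set S : ℝ := (-1 : ℝ) ^ (m + 1) * 2 ^ (2 * m - 1) * π ^ (2 * m) * bernoulli (2 * m) / (2 * m)!
  have hS0 : 0 ≤ S := hasSum_le (fun i => by positivity) hasSum_zero hs
  -- `ζ(2m) ≤ ζ(2) = π²/6 < 2`
  have hS2 : S ≤ 2 := by
    have hζ : S ≤ π ^ 2 / 6 := by
      refine hasSum_le (fun i => ?_) hs hasSum_zeta_two
      rcases Nat.eq_zero_or_pos i with rfl | hi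
      · simp [hm]
      · gcongr
        · exact_mod_cast hi
        · omega
    nlinarith [pi_lt_d2, pi_pos]
  have hpow : (2 : ℝ) ^ (2 * m) = 2 * 2 ^ (2 * m - 1) := by
    rw [← pow_succ' (2 : ℝ), Nat.sub_add_cancel (by omega)]
  have key : (2 * π) ^ (2 * m) * |(bernoulli (2 * m) : ℝ)| = 2 * (2 * m)! * S := by
    rw [← abs_of_nonneg hS0, mul_pow, hpow]
    simp only [S, abs_div, abs_mul, abs_pow, abs_neg, abs_one, one_pow, Nat.abs_cast,
      abs_of_pos pi_pos, abs_two]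
    field_simp
  rw [le_div_iff₀ (by positivity), mul_comm, key]
  nlinarith [(2 * m).factorial_pos]

noncomputable def qCatalanVariance (n : ℕ) : ℝ := (n : ℝ) * ((n : ℝ) - 1) * ((n : ℝ) + 1) / 6

noncomputable def bernoulliTerm (n : ℕ) (t : ℝ) (m : ℕ) : ℝ :=
  (bernoulli (2 * m) : ℝ) * t ^ (2 * m) /
      ((2 * m : ℕ) * (2 * m)! * √(qCatalanVariance n) ^ (2 * m)) *
    ∑ i ∈ Icc 2 n, (((n : ℝ) + (i : ℝ)) ^ (2 * m) - (i : ℝ) ^ (2 * m))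

lemma cube_div_twelve_le_qCatalanVariance {n : ℕ} (hn : 2 ≤ n) :
    (n : ℝ) ^ 3 / 12 ≤ qCatalanVariance n := by
  have hn' : (2 : ℝ) ≤ n := by exact_mod_cast hn
  unfold qCatalanVariance
  nlinarith [sq_nonneg ((n : ℝ) - 2)]

lemma sum_Icc_pow_sub_pow_nonneg (n p : ℕ) :
    0 ≤ ∑ i ∈ Icc 2 n, (((n : ℝ) + i) ^ p - (i : ℝ) ^ p) :=
  sum_nonneg fun i _ => sub_nonneg.mpr <| pow_le_pow_left₀ (by positivity) (by simp) _

lemma sum_Icc_pow_sub_pow_le (n p : ℕ) :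
    ∑ i ∈ Icc 2 n, (((n : ℝ) + i) ^ p - (i : ℝ) ^ p) ≤ n * (2 * n) ^ p := by
  calc ∑ i ∈ Icc 2 n, (((n : ℝ) + i) ^ p - (i : ℝ) ^ p)
      ≤ ∑ _i ∈ Icc 2 n, (2 * (n : ℝ)) ^ p := by
        refine sum_le_sum fun i hi => ?_
        have hin : (i : ℝ) ≤ n := by exact_mod_cast (mem_Icc.mp hi).2
        have : ((n : ℝ) + i) ^ p ≤ (2 * n) ^ p := pow_le_pow_left₀ (by positivity) (by linarith) _
        linarith [pow_nonneg (Nat.cast_nonneg (α := ℝ) i) p]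
    _ = (n + 1 - 2 : ℕ) * (2 * (n : ℝ)) ^ p := by rw [sum_const, Nat.card_Icc, nsmul_eq_mul]
    _ ≤ n * (2 * n) ^ p := by gcongr; exact_mod_cast Nat.sub_le_of_le_add (by omega)

lemma abs_bernoulliTerm_le {C : ℝ} {n m : ℕ} {t : ℝ} (hn : 2 ≤ n) (hm : m ≠ 0) (ht : |t| ≤ C) :
    |bernoulliTerm n t m| ≤ 4 * n * (4 * C ^ 2 / (3 * n)) ^ m := by
  have hnpos : (0 : ℝ) < n := by positivity
  have hσ : 0 < qCatalanVariance n :=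
    lt_of_lt_of_le (by positivity) (cube_div_twelve_le_qCatalanVariance hn)
  have h36 : (36 : ℝ) ^ m ≤ (2 * π) ^ (2 * m) := by
    rw [pow_mul]; gcongr; nlinarith [pi_gt_three]
  have hm1 : (1 : ℝ) ≤ (2 * m : ℕ) := by exact_mod_cast (by omega : 1 ≤ 2 * m)
  have hden : (0 : ℝ) < (2 * m : ℕ) * (2 * m)! * qCatalanVariance n ^ m := by positivity
  unfold bernoulliTerm
  rw [pow_mul √_, sq_sqrt hσ.le, abs_mul, abs_of_nonneg (sum_Icc_pow_sub_pow_nonneg n _),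
    abs_div, abs_of_pos hden, abs_mul, abs_pow]
  calc |(bernoulli (2 * m) : ℝ)| * |t| ^ (2 * m) /
        ((2 * m : ℕ) * (2 * m)! * qCatalanVariance n ^ m) *
        ∑ i ∈ Icc 2 n, (((n : ℝ) + i) ^ (2 * m) - (i : ℝ) ^ (2 * m))
      ≤ 4 * (2 * m)! / 36 ^ m * C ^ (2 * m) / (1 * (2 * m)! * ((n : ℝ) ^ 3 / 12) ^ m) *
          (n * (2 * n) ^ (2 * m)) := by
        have hC : 0 ≤ C := (abs_nonneg t).trans ht
        gcongr
        · exact sum_Icc_pow_sub_pow_nonneg n _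
        · exact (abs_bernoulli_two_mul_le hm).trans (by gcongr)
        · exact cube_div_twelve_le_qCatalanVariance hn
        · exact sum_Icc_pow_sub_pow_le n _
    _ = 4 * n * (4 * C ^ 2 / (3 * n)) ^ m := by
        rw [pow_mul, pow_mul, div_pow, div_pow, mul_pow, mul_pow, mul_pow, ← pow_mul, ← pow_mul,
          show (36 : ℝ) ^ m = 3 ^ m * 12 ^ m by rw [← mul_pow]; norm_num]
        field_simp
        ring

lemma abs_tsum_le_of_abs_le_geometric {f : ℕ → ℝ} {a r : ℝ} (hr₀ : 0 ≤ r) (hr₁ : r < 1)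
    (hf : ∀ k, |f k| ≤ a * r ^ k) : |∑' k, f k| ≤ a / (1 - r) := by
  simpa only [Real.norm_eq_abs, ← div_eq_mul_inv] using
    tsum_of_norm_bounded (f := f) ((hasSum_geometric_of_lt_one hr₀ hr₁).mul_left a)
      (by simpa only [Real.norm_eq_abs] using hf)

lemma abs_tsum_bernoulliTerm_le {C : ℝ} {n : ℕ} {t : ℝ} (hn : 2 ≤ n) (hCn : 8 * C ^ 2 ≤ 3 * n)
    (ht : |t| ≤ C) : |∑' k, bernoulliTerm n t (k + 2)| ≤ 128 * C ^ 4 / (9 * n) := by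
  have hnpos : (0 : ℝ) < n := by positivity
  set r := 4 * C ^ 2 / (3 * n) with hr
  have hr₀ : 0 ≤ r := by positivity
  have hr₁ : r ≤ 1 / 2 := by rw [hr, div_le_iff₀ (by positivity)]; linarith
  calc |∑' k, bernoulliTerm n t (k + 2)|
      ≤ 4 * n * r ^ 2 / (1 - r) :=
        abs_tsum_le_of_abs_le_geometric hr₀ (by linarith) fun k =>
          (abs_bernoulliTerm_le hn (by omega) ht).trans_eq (by ring)
    _ ≤ 4 * n * r ^ 2 / (1 / 2) := by gcongr; linarith
    _ = 128 * C ^ 4 / (9 * n) := by rw [hr]; field_simp; ring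

theorem bernoulli_tail_sum_tendsto_zero_general (C : ℝ) :
    ∀ ε : ℝ, 0 < ε → ∃ N : ℕ, ∀ n : ℕ, N ≤ n → ∀ t : ℝ, |t| ≤ C →
      |∑' k : ℕ,
          (bernoulli (2 * (k + 2)) : ℝ) * t ^ (2 * (k + 2)) /
              ((2 * (k + 2) : ℕ) * (Nat.factorial (2 * (k + 2))) *
                Real.sqrt ((n : ℝ) * ((n : ℝ) - 1) * ((n : ℝ) + 1) / 6) ^ (2 * (k + 2))) *
            ∑ i ∈ Finset.Icc 2 n,
              (((n : ℝ) + (i : ℝ)) ^ (2 * (k + 2)) - (i : ℝ) ^ (2 * (k + 2)))| < ε := by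
  intro ε hε
  obtain ⟨N, hN⟩ := exists_nat_gt (2 + 8 * C ^ 2 + 128 * C ^ 4 / (9 * ε))
  refine ⟨N, fun n hNn t ht => ?_⟩
  have hn : N ≤ (n : ℝ) := by exact_mod_cast hNn
  have hCε : 0 ≤ 128 * C ^ 4 / (9 * ε) := by positivity
  have hn2 : 2 ≤ n := by exact_mod_cast (by linarith [sq_nonneg C] : (2 : ℝ) ≤ n)
  have hnε : 128 * C ^ 4 / (9 * ε) < n := by linarith [sq_nonneg C]
  calc |∑' k, bernoulliTerm n t (k + 2)|
      ≤ 128 * C ^ 4 / (9 * n) := abs_tsum_bernoulliTerm_le hn2 (by linarith) ht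
    _ < ε := by
        rw [div_lt_iff₀ (by positivity)]
        rw [div_lt_iff₀ (by positivity)] at hnε
        linarith

/-- The tail series $Σ_{k≥2} B_{2k} t^{2k}/(2k (2k)! σ^{2k}) Σ_{i=2}^n ((n+i)^{2k}-i^{2k})$
tends to $0$ as $n → ∞$, uniformly for $t$ in any bounded set, where
$σ^2 = n(n-1)(n+1)/6$. -/
theorem bernoulli_tail_sum_tendsto_zero (C : ℝ) (hC : 0 < C) :
    ∀ ε : ℝ, 0 < ε → ∃ N : ℕ, ∀ n : ℕ, N ≤ n → ∀ t : ℝ, |t| ≤ C →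
      |∑' k : ℕ,
          (bernoulli (2 * (k + 2)) : ℝ) * t ^ (2 * (k + 2)) /
              ((2 * (k + 2) : ℕ) * (Nat.factorial (2 * (k + 2))) *
                Real.sqrt ((n : ℝ) * ((n : ℝ) - 1) * ((n : ℝ) + 1) / 6) ^ (2 * (k + 2))) *
            ∑ i ∈ Finset.Icc 2 n,
              (((n : ℝ) + (i : ℝ)) ^ (2 * (k + 2)) - (i : ℝ) ^ (2 * (k + 2)))| < ε :=
  bernoulli_tail_sum_tendsto_zero_general C
end

section
/- For real x ≠ 0 with |x| < 2π, ln(sinh(x/2)/(x/2)) = Σ_{k=1}^{∞} B_{2k} · x^{2k}/(2k·(2k)!), where B_{2k} are the Bernoulli numbers. -/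
/-!
Substituting `z = i y / π` in Euler's product for `sin (π z) / (π z)` gives
`sinh y / y = ∏_{j ≥ 1} (1 + y² / (π² j²))`. Taking logarithms and expanding each
`log (1 + t)` as a power series in `t = (y / (π j))² < 1` gives a double series with
geometrically dominated terms, so the two summations may be swapped; the inner sums are then
`ζ(2k) = (-1)^(k+1) 2^(2k-1) π^(2k) B_{2k} / (2k)!`, and `y = x / 2`.
-/

open Real Filter Finset Topology

lemma Real.hasSum_log_one_add_of_tendsto_prod {t : ℕ → ℝ} {P : ℝ} (ht : ∀ j, 0 ≤ t j)
    (hP : Tendsto (fun n => ∏ j ∈ range n, (1 + t j)) atTop (𝓝 P)) :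
    HasSum (fun j => log (1 + t j)) (log P) := by
  have hle : ∀ j, 1 ≤ 1 + t j := fun j => le_add_of_nonneg_right (ht j)
  have hP1 : 1 ≤ P := ge_of_tendsto' hP fun n => Finset.one_le_prod fun j _ => hle j
  rw [hasSum_iff_tendsto_nat_of_nonneg (fun j => log_nonneg (hle j))]
  refine ((continuousAt_log (by positivity)).tendsto.comp hP).congr fun n => ?_
  exact log_prod fun j _ => (zero_lt_one.trans_le (hle j)).ne'

lemma Real.hasSum_log_one_add_of_abs_lt_one {x : ℝ} (hx : |x| < 1) :
    HasSum (fun k : ℕ => (-1) ^ k * x ^ (k + 1) / (k + 1)) (log (1 + x)) := by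
  have h := (hasSum_pow_div_log_of_abs_lt_one (x := -x) (by rwa [abs_neg])).neg
  rw [neg_neg, sub_neg_eq_add] at h
  refine h.congr_fun fun k => ?_
  rw [neg_pow x]
  ring

lemma summable_uncurry_log_series {t : ℕ → ℝ} {q : ℝ} (ht : Summable t) (ht0 : ∀ j, 0 ≤ t j)
    (htq : ∀ j, t j ≤ q) (hq : q < 1) :
    Summable (Function.uncurry fun j (k : ℕ) => (-1) ^ k * t j ^ (k + 1) / (k + 1)) := by
  have hq0 : 0 ≤ q := (ht0 0).trans (htq 0)
  refine (ht.mul_of_nonneg (summable_geometric_of_lt_one hq0 hq) ht0 fun _ => pow_nonneg hq0 _)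
    |>.of_norm_bounded ?_
  rintro ⟨j, k⟩
  calc ‖(-1) ^ k * t j ^ (k + 1) / (k + 1)‖ = t j ^ (k + 1) / (k + 1) := by
        rw [norm_div, norm_mul, norm_pow, norm_neg, norm_one, one_pow, one_mul, norm_pow,
          Real.norm_of_nonneg (ht0 j), Real.norm_of_nonneg (by positivity)]
    _ ≤ t j ^ (k + 1) := div_le_self (pow_nonneg (ht0 j) _) (by simp)
    _ ≤ t j * q ^ k := by
        rw [pow_succ']
        exact mul_le_mul_of_nonneg_left (pow_le_pow_left₀ (ht0 j) (htq j) k) (ht0 j)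

lemma sq_div_lt_one_of_abs_lt {a b : ℝ} (h : |a| < b) : (a / b) ^ 2 < 1 := by
  have hb : 0 < b := (abs_nonneg a).trans_lt h
  rw [sq_lt_one_iff_abs_lt_one, abs_div, abs_of_pos hb]
  exact (div_lt_one hb).2 h

lemma hasSum_one_div_succ_pow_two_mul {k : ℕ} (hk : k ≠ 0) :
    HasSum (fun n : ℕ => 1 / ((n : ℝ) + 1) ^ (2 * k))
      ((-1 : ℝ) ^ (k + 1) * (2 : ℝ) ^ (2 * k - 1) * π ^ (2 * k) *
        bernoulli (2 * k) / (2 * k).factorial) := by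
  have h := (hasSum_nat_add_iff' 1).mpr (hasSum_zeta_nat hk)
  simpa [zero_pow (by omega : 2 * k ≠ 0)] using h

noncomputable def sinhTerm (y : ℝ) (j : ℕ) : ℝ := (y / (π * (j + 1))) ^ 2

lemma sinhTerm_nonneg (y : ℝ) (j : ℕ) : 0 ≤ sinhTerm y j := sq_nonneg _

lemma sinhTerm_le (y : ℝ) (j : ℕ) : sinhTerm y j ≤ (y / π) ^ 2 := by
  have hj : (1 : ℝ) ≤ j + 1 := by linarith [(j.cast_nonneg : (0 : ℝ) ≤ j)]
  rw [sinhTerm, div_pow, div_pow, mul_pow]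
  gcongr
  exact le_mul_of_one_le_right (by positivity) (one_le_pow₀ hj)

lemma sinhTerm_pow (y : ℝ) (j m : ℕ) :
    sinhTerm y j ^ m = (y / π) ^ (2 * m) * (1 / ((j : ℝ) + 1) ^ (2 * m)) := by
  rw [sinhTerm, ← pow_mul, div_mul_eq_div_div, div_pow, div_pow]
  ring

lemma summable_sinhTerm (y : ℝ) : Summable (sinhTerm y) := by
  refine ((hasSum_one_div_succ_pow_two_mul one_ne_zero).summable.mul_left ((y / π) ^ 2)).congr
    fun j => ?_
  rw [← pow_one (sinhTerm y j), sinhTerm_pow]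

lemma ofReal_sinhTerm (y : ℝ) (j : ℕ) :
    (sinhTerm y j : ℂ) = sineTerm (y * Complex.I / π) j := by
  have hπ : (π : ℂ) ≠ 0 := Complex.ofReal_ne_zero.mpr pi_ne_zero
  simp only [sinhTerm, sineTerm]
  push_cast
  field_simp
  rw [Complex.I_sq]
  ring

lemma tendsto_prod_one_add_sinhTerm {y : ℝ} (hy : y ≠ 0) :
    Tendsto (fun n => ∏ j ∈ range n, (1 + sinhTerm y j)) atTop (𝓝 (sinh y / y)) := by
  have hπ : (π : ℂ) ≠ 0 := Complex.ofReal_ne_zero.mpr pi_ne_zero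
  have hz : y * Complex.I / π ≠ 0 := by simp [hy, pi_ne_zero]
  have hπz : (π : ℂ) * (y * Complex.I / π) = y * Complex.I := mul_div_cancel₀ _ hπ
  rw [← Filter.tendsto_ofReal_iff]
  convert tendsto_euler_sin_prod' hz using 2 with n
  · push_cast
    simp only [ofReal_sinhTerm]
  · rw [hπz, Complex.sin_mul_I, mul_div_mul_right _ _ Complex.I_ne_zero]
    push_cast
    rfl

lemma hasSum_sinhTerm_pow_bernoulli (y : ℝ) (k : ℕ) :
    HasSum (fun j => (-1) ^ k * sinhTerm y j ^ (k + 1) / (k + 1))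
      ((bernoulli (2 * (k + 1)) : ℝ) * (2 * y) ^ (2 * (k + 1)) /
        ((2 * (k + 1) : ℕ) * (2 * (k + 1)).factorial)) := by
  have h := (hasSum_one_div_succ_pow_two_mul k.add_one_ne_zero).mul_left
    ((-1) ^ k * (y / π) ^ (2 * (k + 1)) / (k + 1))
  have hsign : (-1 : ℝ) ^ k * (-1) ^ (k + 1 + 1) = 1 := by
    rw [← pow_add]
    exact Even.neg_one_pow ⟨k + 1, by ring⟩
  have hval : (bernoulli (2 * (k + 1)) : ℝ) * (2 * y) ^ (2 * (k + 1)) /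
      ((2 * (k + 1) : ℕ) * (2 * (k + 1)).factorial) =
      (-1) ^ k * (y / π) ^ (2 * (k + 1)) / (k + 1) * ((-1) ^ (k + 1 + 1) *
        (2 : ℝ) ^ (2 * (k + 1) - 1) * π ^ (2 * (k + 1)) * bernoulli (2 * (k + 1)) /
          (2 * (k + 1)).factorial) := by
    rw [show 2 * (k + 1) - 1 = 2 * k + 1 by omega, mul_pow, div_pow]
    push_cast
    field_simp
    linear_combination (-(bernoulli (2 * (k + 1)) : ℝ) * y ^ (2 * (k + 1)) * 2 * 2 ^ (2 * k + 1)) *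
      hsign
  rw [hval]
  exact h.congr_fun fun j => by rw [sinhTerm_pow]; ring

/-- For real $x ≠ 0$ with $|x| < 2π$,
$\ln(\sinh(x/2)/(x/2)) = Σ_{k≥1} B_{2k} x^{2k}/(2k (2k)!)$. -/
theorem log_sinh_div_eq_bernoulli_series (x : ℝ) (hx : x ≠ 0) (hx2 : |x| < 2 * Real.pi) :
    Real.log (Real.sinh (x / 2) / (x / 2))
      = ∑' k : ℕ, (bernoulli (2 * (k + 1)) : ℝ) * x ^ (2 * (k + 1)) /
          ((2 * (k + 1) : ℕ) * Nat.factorial (2 * (k + 1))) := by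
  set y := x / 2 with hy
  have hq : (y / π) ^ 2 < 1 := sq_div_lt_one_of_abs_lt (by rw [hy, abs_div, abs_two]; linarith)
  have hrow j := hasSum_log_one_add_of_abs_lt_one
    (by rw [abs_of_nonneg (sinhTerm_nonneg y j)]; exact (sinhTerm_le y j).trans_lt hq)
  have hcol := hasSum_sinhTerm_pow_bernoulli y
  calc log (sinh y / y) = ∑' j, log (1 + sinhTerm y j) :=
        (hasSum_log_one_add_of_tendsto_prod (sinhTerm_nonneg y)
          (tendsto_prod_one_add_sinhTerm (div_ne_zero hx two_ne_zero))).tsum_eq.symm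
    _ = ∑' j, ∑' k : ℕ, (-1) ^ k * sinhTerm y j ^ (k + 1) / (k + 1) :=
        tsum_congr fun j => (hrow j).tsum_eq.symm
    _ = ∑' k : ℕ, ∑' j, (-1) ^ k * sinhTerm y j ^ (k + 1) / (k + 1) :=
        ((summable_uncurry_log_series (summable_sinhTerm y) (sinhTerm_nonneg y) (sinhTerm_le y)
          hq).tsum_comm' (fun j => (hrow j).summable) (fun k => (hcol k).summable)).symm
    _ = _ := tsum_congr fun k => by rw [(hcol k).tsum_eq, hy, mul_div_cancel₀ x two_ne_zero]
end

section
/- Let a_1,...,a_n and b_1,...,b_n be positive reals such that φ_n(q) = Π_{i=1}^n (1-q^{a_i})/(1-q^{b_i}) is a polynomial with nonnegative coefficients, and let ξ_n be the associated random variable. Then Var(ξ_n) = (1/12) Σ_{i=1}^n (a_i² - b_i²). -/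
/-!
With `q = eᵗ`, `P(eᵗ) / P(1)` is the moment generating function of `ξ`, and for `t ≠ 0` the
`i`-th factor is `(aᵢ / bᵢ) · U(aᵢ t) / U(bᵢ t)`, where `U(x) = (eˣ - 1) / x` is the moment
generating function of the uniform law on `[0, 1]`, whose mean is `1/2` and variance `1/12`.
As for independent random variables, means and variances add when such functions are multiplied,
and they change sign under inversion; this is already visible in the second-order expansions at
`t = 0`. Hence the variance of `ξ` is `∑ᵢ (aᵢ² - bᵢ²) / 12`.
-/

open Polynomial Finset

open Filter Topology Asymptotics Real

/-- `f t = A · 𝔼 e^{tξ} + o(t²)` for a law `ξ` with mean `μ` and variance `v`. The limit is taken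
on the punctured neighbourhood because the quotients `(1 - e^{at}) / (1 - e^{bt})` are junk
at `t = 0`. -/
def HasMeanVarExpansion (f : ℝ → ℝ) (A μ v : ℝ) : Prop :=
  (fun t => f t - A * (1 + μ * t + (v + μ ^ 2) / 2 * t ^ 2)) =o[𝓝[≠] 0] fun t => t ^ 2

lemma isBigO_one_nhdsNE_of_continuous {r : ℝ → ℝ} (hr : Continuous r) :
    r =O[𝓝[≠] 0] fun _ => (1 : ℝ) :=
  ((hr.tendsto 0).isBigO_one ℝ).mono nhdsWithin_le_nhds

lemma isLittleO_pow_three_mul {r : ℝ → ℝ} (hr : r =O[𝓝[≠] 0] fun _ => (1 : ℝ)) :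
    (fun t => t ^ 3 * r t) =o[𝓝[≠] 0] fun t => t ^ 2 := by
  simpa using
    ((isLittleO_pow_pow (𝕜 := ℝ) (by norm_num : 2 < 3)).mono nhdsWithin_le_nhds).mul_isBigO hr

lemma tendsto_const_mul_nhdsNE_zero {c : ℝ} (hc : c ≠ 0) :
    Tendsto (fun t => c * t) (𝓝[≠] 0) (𝓝[≠] 0) :=
  tendsto_nhdsWithin_of_tendsto_nhds_of_eventually_within _
    (((continuous_const_mul c).tendsto' 0 0 (mul_zero c)).mono_left nhdsWithin_le_nhds)
    (eventually_nhdsWithin_of_forall fun _ ht => mul_ne_zero hc ht)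

lemma coeffs_eq_zero_of_isLittleO_sq {c₁ c₂ : ℝ}
    (h : (fun t => c₁ * t + c₂ * t ^ 2) =o[𝓝[≠] 0] fun t => t ^ 2) : c₁ = 0 ∧ c₂ = 0 := by
  have hquot := h.tendsto_div_nhds_zero
  have hlin : Tendsto (fun t => c₁ + c₂ * t) (𝓝[≠] 0) (𝓝 0) := by
    have := hquot.mul ((continuous_id'.tendsto' 0 0 rfl).mono_left nhdsWithin_le_nhds)
    rw [zero_mul] at this
    refine this.congr' (eventually_nhdsWithin_of_forall fun t (ht : t ≠ 0) => ?_)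
    field_simp
  have hc₁ : c₁ = 0 := tendsto_nhds_unique
    (((continuous_const.add (continuous_const_mul c₂)).tendsto' 0 c₁ (by simp)).mono_left
      nhdsWithin_le_nhds) hlin
  subst hc₁
  refine ⟨rfl, tendsto_nhds_unique tendsto_const_nhds (hquot.congr' ?_)⟩
  exact eventually_nhdsWithin_of_forall fun t (ht : t ≠ 0) => by field_simp; ring

namespace HasMeanVarExpansion

variable {f g : ℝ → ℝ} {A B μ ν v w : ℝ}

lemma congr (h : HasMeanVarExpansion f A μ v) (hfg : f =ᶠ[𝓝[≠] 0] g) :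
    HasMeanVarExpansion g A μ v :=
  h.congr' (hfg.sub EventuallyEq.rfl) EventuallyEq.rfl

lemma tendsto (h : HasMeanVarExpansion f A μ v) : Tendsto f (𝓝[≠] 0) (𝓝 A) := by
  have hsq : Tendsto (fun t : ℝ => t ^ 2) (𝓝[≠] 0) (𝓝 0) :=
    ((continuous_pow 2).tendsto' 0 0 (by simp)).mono_left nhdsWithin_le_nhds
  have hpoly : Tendsto (fun t => A * (1 + μ * t + (v + μ ^ 2) / 2 * t ^ 2)) (𝓝[≠] 0) (𝓝 A) :=
    (Continuous.tendsto' (by fun_prop) 0 A (by simp)).mono_left nhdsWithin_le_nhds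
  simpa using (h.trans_tendsto hsq).add hpoly

lemma unique (h : HasMeanVarExpansion f A μ v) (h' : HasMeanVarExpansion f A ν w) (hA : A ≠ 0) :
    μ = ν ∧ v = w := by
  obtain ⟨h₁, h₂⟩ := coeffs_eq_zero_of_isLittleO_sq
    ((h'.sub h).congr_left fun t => by ring :
      (fun t => A * (μ - ν) * t + A * ((v + μ ^ 2) / 2 - (w + ν ^ 2) / 2) * t ^ 2)
        =o[𝓝[≠] 0] fun t => t ^ 2)
  have hμ : μ = ν := sub_eq_zero.1 ((mul_eq_zero.1 h₁).resolve_left hA)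
  subst hμ
  have hv := (mul_eq_zero.1 h₂).resolve_left hA
  exact ⟨rfl, by linarith⟩

lemma const (c : ℝ) : HasMeanVarExpansion (fun _ => c) c 0 0 := by
  simp [HasMeanVarExpansion]

lemma const_mul (h : HasMeanVarExpansion f A μ v) (c : ℝ) :
    HasMeanVarExpansion (fun t => c * f t) (c * A) μ v :=
  (h.const_mul_left c).congr_left fun t => by ring

lemma mul (hf : HasMeanVarExpansion f A μ v) (hg : HasMeanVarExpansion g B ν w) :
    HasMeanVarExpansion (fun t => f t * g t) (A * B) (μ + ν) (v + w) := by
  set M := (v + μ ^ 2) / 2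
  set N := (w + ν ^ 2) / 2
  have h₁ : (fun t => (f t - A * (1 + μ * t + M * t ^ 2)) * g t) =o[𝓝[≠] 0] fun t => t ^ 2 := by
    simpa using hf.mul_isBigO (hg.tendsto.isBigO_one ℝ)
  have h₂ : (fun t => A * (1 + μ * t + M * t ^ 2) * (g t - B * (1 + ν * t + N * t ^ 2)))
      =o[𝓝[≠] 0] fun t => t ^ 2 := by
    simpa using (isBigO_one_nhdsNE_of_continuous (by fun_prop)).mul_isLittleO hg
  have h₃ := isLittleO_pow_three_mul
    (isBigO_one_nhdsNE_of_continuous (r := fun t => A * B * (μ * N + ν * M + M * N * t))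
      (by fun_prop))
  refine ((h₁.add h₂).add h₃).congr_left fun t => ?_
  simp only [M, N]
  ring

lemma inv (hg : HasMeanVarExpansion g B ν w) (hB : B ≠ 0) :
    HasMeanVarExpansion (fun t => (g t)⁻¹) B⁻¹ (-ν) (-w) := by
  set N := (w + ν ^ 2) / 2
  have hinv : (fun t => (g t)⁻¹) =O[𝓝[≠] 0] fun _ => (1 : ℝ) := (hg.tendsto.inv₀ hB).isBigO_one ℝ
  have h₁ : (fun t => -(B⁻¹ * (1 - ν * t + (ν ^ 2 - N) * t ^ 2) * (g t)⁻¹) *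
      (g t - B * (1 + ν * t + N * t ^ 2))) =o[𝓝[≠] 0] fun t => t ^ 2 := by
    simpa using
      (((isBigO_one_nhdsNE_of_continuous (by fun_prop)).mul hinv).neg_left).mul_isLittleO hg
  have h₂ := isLittleO_pow_three_mul (r := fun t => -(ν * (ν ^ 2 - 2 * N) + N * (ν ^ 2 - N) * t) *
    (g t)⁻¹) (by simpa using (isBigO_one_nhdsNE_of_continuous (by fun_prop)).mul hinv)
  refine (h₁.add h₂).congr' ?_ EventuallyEq.rfl
  filter_upwards [hg.tendsto.eventually_ne hB] with t ht
  simp only [N]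
  field_simp
  ring

lemma comp_const_mul (h : HasMeanVarExpansion f A μ v) {c : ℝ} (hc : c ≠ 0) :
    HasMeanVarExpansion (fun t => f (c * t)) A (c * μ) (c ^ 2 * v) := by
  have hsq : (fun t => (c * t) ^ 2) =O[𝓝[≠] 0] fun t => t ^ 2 :=
    ((isBigO_refl (fun t : ℝ => t ^ 2) _).const_mul_left (c ^ 2)).congr_left fun t => by ring
  exact ((h.comp_tendsto (tendsto_const_mul_nhdsNE_zero hc)).trans_isBigO hsq).congr_left
    fun t => by simp only [Function.comp]; ring

lemma prod {ι : Type*} (s : Finset ι) {f : ι → ℝ → ℝ} {A μ v : ι → ℝ}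
    (h : ∀ i ∈ s, HasMeanVarExpansion (f i) (A i) (μ i) (v i)) :
    HasMeanVarExpansion (fun t => ∏ i ∈ s, f i t) (∏ i ∈ s, A i) (∑ i ∈ s, μ i)
      (∑ i ∈ s, v i) := by
  induction s using Finset.cons_induction with
  | empty => simpa using const 1
  | cons i s _ ih =>
    simp only [prod_cons, sum_cons]
    exact (h i (mem_cons_self i s)).mul (ih fun j hj => h j (mem_cons_of_mem hj))

end HasMeanVarExpansion

lemma hasMeanVarExpansion_exp_sub_one_div :
    HasMeanVarExpansion (fun x => (exp x - 1) / x) 1 (1 / 2) (1 / 12) := by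
  have h := ((Real.exp_sub_sum_range_succ_isLittleO_pow 3).mono nhdsWithin_le_nhds).mul_isBigO
    (isBigO_refl (fun x : ℝ => x⁻¹) (𝓝[≠] 0))
  refine h.congr' ?_ ?_
  · filter_upwards [self_mem_nhdsWithin] with x (hx : x ≠ 0)
    simp only [sum_range_succ, sum_range_zero, Nat.factorial]
    field_simp
    ring
  · filter_upwards [self_mem_nhdsWithin] with x (hx : x ≠ 0)
    field_simp

lemma hasMeanVarExpansion_one_sub_exp_div_one_sub_exp {a b : ℝ} (ha : a ≠ 0) (hb : b ≠ 0) :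
    HasMeanVarExpansion (fun t => (1 - exp (a * t)) / (1 - exp (b * t))) (a / b) ((a - b) / 2)
      ((a ^ 2 - b ^ 2) / 12) := by
  have h := (((hasMeanVarExpansion_exp_sub_one_div.comp_const_mul ha).mul
    ((hasMeanVarExpansion_exp_sub_one_div.comp_const_mul hb).inv one_ne_zero)).const_mul (a / b))
  convert h.congr ?_ using 1
  · field_simp
  · ring
  · ring
  · filter_upwards [self_mem_nhdsWithin] with t (ht : t ≠ 0)
    have hbt : exp (b * t) ≠ 1 := by simp [hb, ht]
    have : 1 - exp (b * t) ≠ 0 := sub_ne_zero.2 hbt.symm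
    field_simp
    ring

lemma isLittleO_exp_const_mul_sub (c : ℝ) :
    (fun t => exp (c * t) - (1 + c * t + c ^ 2 / 2 * t ^ 2)) =o[𝓝 0] fun t => t ^ 2 := by
  have hsq : (fun t => (c * t) ^ 2) =O[𝓝 0] fun t => t ^ 2 :=
    ((isBigO_refl (fun t : ℝ => t ^ 2) _).const_mul_left (c ^ 2)).congr_left fun t => by ring
  refine (((Real.exp_sub_sum_range_succ_isLittleO_pow 2).comp_tendsto
    ((continuous_const_mul c).tendsto' 0 0 (mul_zero c))).trans_isBigO hsq).congr_left fun t => ?_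
  simp only [Function.comp_apply, sum_range_succ, sum_range_zero, Nat.factorial]
  ring

lemma Polynomial.isLittleO_eval_exp_sub (P : ℝ[X]) :
    (fun t => P.eval (exp t) - (P.eval 1 + (derivative P).eval 1 * t
      + ((derivative (derivative P)).eval 1 + (derivative P).eval 1) / 2 * t ^ 2))
      =o[𝓝 0] fun t => t ^ 2 := by
  induction P using Polynomial.induction_on' with
  | add p q hp hq =>
    exact (hp.add hq).congr_left fun t => by simp only [eval_add, derivative_add]; ring
  | monomial k c =>
    refine ((isLittleO_exp_const_mul_sub k).const_mul_left c).congr_left fun t => ?_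
    rcases k with _ | _ | k <;> simp [← Real.exp_nat_mul] <;> ring

lemma Polynomial.hasMeanVarExpansion_eval_exp (P : ℝ[X]) (hP : P.eval 1 ≠ 0) :
    HasMeanVarExpansion (fun t => P.eval (exp t)) (P.eval 1) ((derivative P).eval 1 / P.eval 1)
      (((derivative (derivative P)).eval 1 + (derivative P).eval 1) / P.eval 1
        - ((derivative P).eval 1 / P.eval 1) ^ 2) :=
  (P.isLittleO_eval_exp_sub.mono nhdsWithin_le_nhds).congr_left fun t => by field_simp; ring

theorem quotient_product_variance_general (n : ℕ) (a b : Fin n → ℝ)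
    (ha : ∀ i, 0 < a i) (hb : ∀ i, 0 < b i) (P : Polynomial ℝ)
    (hP : ∀ q : ℝ, 0 < q → q ≠ 1 →
      P.eval q = ∏ i : Fin n, (1 - q ^ (a i)) / (1 - q ^ (b i))) :
    ((Polynomial.derivative (Polynomial.derivative P)).eval 1
          + (Polynomial.derivative P).eval 1) / P.eval 1
        - ((Polynomial.derivative P).eval 1 / P.eval 1) ^ 2
      = (∑ i : Fin n, ((a i) ^ 2 - (b i) ^ 2)) / 12 := by
  have hG := HasMeanVarExpansion.prod univ fun i _ =>
    hasMeanVarExpansion_one_sub_exp_div_one_sub_exp (ha i).ne' (hb i).ne'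
  have hFG : (fun t => ∏ i, (1 - exp (a i * t)) / (1 - exp (b i * t)))
      =ᶠ[𝓝[≠] 0] fun t => P.eval (exp t) := by
    filter_upwards [self_mem_nhdsWithin] with t (ht : t ≠ 0)
    simp_rw [hP _ (exp_pos t) (by simpa using ht), ← Real.exp_mul, mul_comm t]
  replace hG := hG.congr hFG
  have hP₁ : P.eval 1 = ∏ i, a i / b i := tendsto_nhds_unique
    ((Continuous.tendsto' (by fun_prop) 0 _ (by simp)).mono_left nhdsWithin_le_nhds) hG.tendsto
  have hK : P.eval 1 ≠ 0 := hP₁ ▸ prod_ne_zero_iff.2 fun i _ => div_ne_zero (ha i).ne' (hb i).ne'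
  rw [← hP₁] at hG
  rw [((P.hasMeanVarExpansion_eval_exp hK).unique hG hK).2, sum_div]

/-- For $φ_n(q) = ∏_{i=1}^n (1-q^{a_i})/(1-q^{b_i})$ a polynomial with nonnegative
coefficients, the variance of the associated random variable is
$\frac1{12} Σ_{i=1}^n (a_i^2 - b_i^2)$. -/
theorem quotient_product_variance (n : ℕ) (a b : Fin n → ℝ)
    (ha : ∀ i, 0 < a i) (hb : ∀ i, 0 < b i) (P : Polynomial ℝ)
    (hcoeff : ∀ k, 0 ≤ P.coeff k)
    (hP : ∀ q : ℝ, 0 < q → q ≠ 1 →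
      P.eval q = ∏ i : Fin n, (1 - q ^ (a i)) / (1 - q ^ (b i))) :
    ((Polynomial.derivative (Polynomial.derivative P)).eval 1
          + (Polynomial.derivative P).eval 1) / P.eval 1
        - ((Polynomial.derivative P).eval 1 / P.eval 1) ^ 2
      = (∑ i : Fin n, ((a i) ^ 2 - (b i) ^ 2)) / 12 :=
  quotient_product_variance_general n a b ha hb P hP
end

section
/- For integers m ≥ 2, n ≥ 2 and k ≥ 1, with a_i = (m-1)n + i and b_i = i for 2 ≤ i ≤ n, one has Σ_{i=2}^{n}(a_i^{2k} - b_i^{2k}) < 8^{2k} ((m-1)n)^{2k+1} and (Σ_{i=2}^{n}(a_i² - b_i²))^k > (m-1)^{2k} n^{2k} (n-1)^k, hence Σ_{i=2}^{n}(a_i^{2k} - b_i^{2k}) / (Σ_{i=2}^{n}(a_i² - b_i²))^k < (8√(2m))^{2k} n^{1-k}. -/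
/-!
Put `c = (m - 1) n ≥ n`. Each term `(c + i)^K - i^K` with `i ≤ n ≤ c` is below `(2c)^K` and there
are `n - 1 < c` terms, so the numerator is below `2^K c^(K+1)`; each term `(c + i)^2 - i^2 = c^2 + 2ci`
exceeds `c^2`, so the denominator exceeds `((n - 1) c^2)^k`. The ratio is then below
`8^(2k) c / (n - 1)^k`, and comparing with `(8 √(2m))^(2k) n^(1-k)` comes down to
`(m - 1) n^k ≤ (2m)^k (n - 1)^k`, i.e. to `m - 1 ≤ m^k` and `n ≤ 2 (n - 1)`.
-/
open Finset

lemma cast_card_Icc_two {n : ℕ} (hn : 1 ≤ n) : (#(Icc 2 n) : ℝ) = n - 1 := by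
  rw [Nat.card_Icc, show n + 1 - 2 = n - 1 by omega, Nat.cast_sub hn, Nat.cast_one]

lemma sum_Icc_two_add_pow_sub_pow_lt {c : ℝ} {n : ℕ} (hn : 1 ≤ n) (hc : (n : ℝ) ≤ c) (K : ℕ) :
    ∑ i ∈ Icc 2 n, ((c + i) ^ K - (i : ℝ) ^ K) < 2 ^ K * c ^ (K + 1) := by
  have hc0 : 0 < c := lt_of_lt_of_le (by exact_mod_cast hn) hc
  calc ∑ i ∈ Icc 2 n, ((c + i) ^ K - (i : ℝ) ^ K)
      ≤ ∑ _i ∈ Icc 2 n, (2 * c) ^ K := by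
        refine sum_le_sum fun i hi => ?_
        have hin : (i : ℝ) ≤ n := by exact_mod_cast (mem_Icc.mp hi).2
        have hpow : (c + i) ^ K ≤ (2 * c) ^ K := pow_le_pow_left₀ (by positivity) (by linarith) K
        linarith [pow_nonneg (Nat.cast_nonneg (α := ℝ) i) K]
    _ = ((n : ℝ) - 1) * (2 * c) ^ K := by rw [sum_const, nsmul_eq_mul, cast_card_Icc_two hn]
    _ < c * (2 * c) ^ K := by gcongr; linarith
    _ = 2 ^ K * c ^ (K + 1) := by ring

lemma sub_one_mul_sq_lt_sum_Icc_two_add_sq_sub_sq {c : ℝ} {n : ℕ} (hc : 0 < c) (hn : 2 ≤ n) :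
    ((n : ℝ) - 1) * c ^ 2 < ∑ i ∈ Icc 2 n, ((c + i) ^ 2 - (i : ℝ) ^ 2) := by
  calc ((n : ℝ) - 1) * c ^ 2 = ∑ _i ∈ Icc 2 n, c ^ 2 := by
        rw [sum_const, nsmul_eq_mul, cast_card_Icc_two (by omega)]
    _ < ∑ i ∈ Icc 2 n, ((c + i) ^ 2 - (i : ℝ) ^ 2) := by
        refine sum_lt_sum_of_nonempty (nonempty_Icc.mpr hn) fun i hi => ?_
        have hi0 : (0 : ℝ) < i := by exact_mod_cast (mem_Icc.mp hi).1.trans_lt' two_pos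
        nlinarith

lemma sub_one_mul_pow_le_two_mul_pow_mul_sub_one_pow {x y : ℝ} (hx : 1 ≤ x) (hy : 2 ≤ y) {k : ℕ}
    (hk : k ≠ 0) : (x - 1) * y ^ k ≤ (2 * x) ^ k * (y - 1) ^ k :=
  calc (x - 1) * y ^ k ≤ x ^ k * (2 * (y - 1)) ^ k :=
        mul_le_mul (by linarith [le_self_pow₀ hx hk]) (pow_le_pow_left₀ (by linarith) (by linarith) k)
          (by positivity) (by positivity)
    _ = (2 * x) ^ k * (y - 1) ^ k := by rw [mul_pow, mul_pow]; ring

lemma eight_pow_mul_div_le {x y : ℝ} (hx : 2 ≤ x) (hy : 2 ≤ y) {k : ℕ} (hk : k ≠ 0) :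
    8 ^ (2 * k) * ((x - 1) * y) ^ (2 * k + 1) / ((x - 1) ^ (2 * k) * y ^ (2 * k) * (y - 1) ^ k)
      ≤ (8 * √(2 * x)) ^ (2 * k) * y ^ ((1 : ℤ) - k) := by
  have hy0 : 0 < y := by linarith
  have hx1 : 0 < x - 1 := by linarith
  have hy1 : 0 < y - 1 := by linarith
  have hsqrt : (8 * √(2 * x)) ^ (2 * k) = 8 ^ (2 * k) * (2 * x) ^ k := by
    rw [mul_pow, pow_mul (√(2 * x)), Real.sq_sqrt (by linarith)]
  rw [hsqrt, zpow_sub₀ hy0.ne', zpow_one, zpow_natCast, div_le_iff₀ (by positivity)]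
  set P := 8 ^ (2 * k) * (x - 1) ^ (2 * k) * y ^ (2 * k + 1) / y ^ k
  calc 8 ^ (2 * k) * ((x - 1) * y) ^ (2 * k + 1) = P * ((x - 1) * y ^ k) := by
        simp only [P, mul_pow]
        field_simp
        ring
    _ ≤ P * ((2 * x) ^ k * (y - 1) ^ k) :=
        mul_le_mul_of_nonneg_left
          (sub_one_mul_pow_le_two_mul_pow_mul_sub_one_pow (by linarith) hy hk) (by positivity)
    _ = 8 ^ (2 * k) * (2 * x) ^ k * (y / y ^ k) *
          ((x - 1) ^ (2 * k) * y ^ (2 * k) * (y - 1) ^ k) := by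
        simp only [P]
        ring

/-- With $a_i = (m-1)n + i$ and $b_i = i$: the three bounds used in proving the
asymptotic normality of the coefficients of the generalized q-Catalan numbers. -/
theorem generalized_qCatalan_bounds (m n k : ℕ) (hm : 2 ≤ m) (hn : 2 ≤ n) (hk : 1 ≤ k) :
    (∑ i ∈ Finset.Icc 2 n,
        ((((m : ℝ) - 1) * n + i) ^ (2 * k) - (i : ℝ) ^ (2 * k))
        < 8 ^ (2 * k) * (((m : ℝ) - 1) * n) ^ (2 * k + 1)) ∧
    ((∑ i ∈ Finset.Icc 2 n,
        ((((m : ℝ) - 1) * n + i) ^ 2 - (i : ℝ) ^ 2)) ^ k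
        > ((m : ℝ) - 1) ^ (2 * k) * (n : ℝ) ^ (2 * k) * ((n : ℝ) - 1) ^ k) ∧
    ((∑ i ∈ Finset.Icc 2 n,
        ((((m : ℝ) - 1) * n + i) ^ (2 * k) - (i : ℝ) ^ (2 * k))) /
        (∑ i ∈ Finset.Icc 2 n,
          ((((m : ℝ) - 1) * n + i) ^ 2 - (i : ℝ) ^ 2)) ^ k
        < (8 * Real.sqrt (2 * m)) ^ (2 * k) * (n : ℝ) ^ ((1 : ℤ) - (k : ℤ))) := by
  have hm' : (2 : ℝ) ≤ m := by exact_mod_cast hm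
  have hn' : (2 : ℝ) ≤ n := by exact_mod_cast hn
  have hk0 : k ≠ 0 := by omega
  have hc : (n : ℝ) ≤ ((m : ℝ) - 1) * n := le_mul_of_one_le_left (by positivity) (by linarith)
  have hc0 : (0 : ℝ) < ((m : ℝ) - 1) * n := by linarith
  have hn1 : (0 : ℝ) < n - 1 := by linarith
  have hnum : ∑ i ∈ Icc 2 n, ((((m : ℝ) - 1) * n + i) ^ (2 * k) - (i : ℝ) ^ (2 * k))
      < 8 ^ (2 * k) * (((m : ℝ) - 1) * n) ^ (2 * k + 1) :=
    (sum_Icc_two_add_pow_sub_pow_lt (by omega) hc (2 * k)).trans_le <|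
      mul_le_mul_of_nonneg_right (pow_le_pow_left₀ (by norm_num) (by norm_num) _) (by positivity)
  have hden : ((m : ℝ) - 1) ^ (2 * k) * (n : ℝ) ^ (2 * k) * ((n : ℝ) - 1) ^ k
      = (((n : ℝ) - 1) * (((m : ℝ) - 1) * n) ^ 2) ^ k := by simp only [mul_pow, ← pow_mul]; ring
  have hden_lt : ((m : ℝ) - 1) ^ (2 * k) * (n : ℝ) ^ (2 * k) * ((n : ℝ) - 1) ^ k
      < (∑ i ∈ Icc 2 n, ((((m : ℝ) - 1) * n + i) ^ 2 - (i : ℝ) ^ 2)) ^ k := by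
    rw [hden]
    exact pow_lt_pow_left₀ (sub_one_mul_sq_lt_sum_Icc_two_add_sq_sub_sq hc0 hn)
      (by positivity) hk0
  refine ⟨hnum, hden_lt, ?_⟩
  calc _ < 8 ^ (2 * k) * (((m : ℝ) - 1) * n) ^ (2 * k + 1)
        / (((m : ℝ) - 1) ^ (2 * k) * (n : ℝ) ^ (2 * k) * ((n : ℝ) - 1) ^ k) :=
        div_lt_div₀ hnum hden_lt.le (by positivity) (by rw [hden]; positivity)
    _ ≤ _ := eight_pow_mul_div_le hm' hn' hk0
end
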